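/- arXiv:2010.14155 — 5 statements merged into one kernel-verified Lean document; each statement's English description precedes it below -/
import Mathlib

section
/- Let k ≥ 1, let G be a finite connected simple graph that is (P3+kP2)-free, and let A be a set of vertices of G such that the subgraph of G induced by A is isomorphic to P3+(k-1)P2. Let B be the set of vertices of G at distance exactly one from A and let C be the set of vertices at distance exactly two from A. Then A, B and C partition the vertex set of G (every vertex of G is at distance at most two from A), and C is a stable set. -/
open SimpleGraph

/-- The disjoint union of a path `P₃` and `k` copies of `P₂`. -/
def P3kP2 (k : ℕ) : SimpleGraph (Fin 3 ⊕ Fin k × Fin 2) :=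
  SimpleGraph.fromRel fun x y =>
    match x, y with
    | Sum.inl a, Sum.inl b => (b : ℕ) = (a : ℕ) + 1
    | Sum.inr a, Sum.inr b => a.1 = b.1 ∧ a.2 ≠ b.2
    | _, _ => False

/-- `G` contains no induced subgraph isomorphic to `H`. -/
def HFree {V W : Type*} (G : SimpleGraph V) (H : SimpleGraph W) : Prop :=
  IsEmpty (H ↪g G)

/-- `D` is a dominating set of `G`. -/
def IsDomSet {V : Type*} (G : SimpleGraph V) (D : Set V) : Prop :=
  ∀ v ∉ D, ∃ u ∈ D, G.Adj u v

/-- `D` is a minimum dominating set of `G`. -/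
def IsMinDomSet {V : Type*} (G : SimpleGraph V) (D : Set V) : Prop :=
  IsDomSet G D ∧ ∀ D' : Set V, IsDomSet G D' → D.ncard ≤ D'.ncard

/-- The distance from a vertex `v` to a set `A` of vertices. -/
noncomputable def distToSet {V : Type*} (G : SimpleGraph V) (v : V) (A : Set V) : ℕ :=
  sInf ((G.dist v) '' A)

/-- The set of vertices at distance two from `A` whose open neighbourhood is a clique. -/
def cliqueDistTwo {V : Type*} (G : SimpleGraph V) (A : Set V) : Set V :=
  {v | distToSet G v A = 2 ∧ G.IsClique (G.neighborSet v)}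

/-- A vertex `c₁` is regular (w.r.t. `A` and `k`) if `c₁ ∈ 𝒞` and there are `k` further
vertices of `𝒞` such that all `k+1` of them are pairwise at distance at least four. -/
def IsRegularVertex {V : Type*} (G : SimpleGraph V) (k : ℕ) (A : Set V) (c₁ : V) : Prop :=
  c₁ ∈ cliqueDistTwo G A ∧ ∃ c : Fin k → V, (∀ i, c i ∈ cliqueDistTwo G A) ∧
    (∀ i, 4 ≤ G.dist c₁ (c i)) ∧ ∀ i j, i ≠ j → 4 ≤ G.dist (c i) (c j)

/-- `v` is a private neighbour of `u` with respect to the dominating set `D`: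
`N[v] ∩ D = {u}`. -/
def IsPrivateNbr {V : Type*} (G : SimpleGraph V) (D : Set V) (u v : V) : Prop :=
  (insert v (G.neighborSet v)) ∩ D = {u}

/-- A stable (independent) set of vertices. -/
def IsStable {V : Type*} (G : SimpleGraph V) (S : Set V) : Prop :=
  S.Pairwise fun u v => ¬ G.Adj u v

/-!
If both ends of an edge are at distance at least two from `A`, the edge together with the
induced `P₃ + (k-1)P₂` on `A` induces a `P₃ + kP₂`. So the vertices at distance at least two
from `A` are pairwise non-adjacent. A vertex at distance at least three would have, by
connectivity, a neighbour, which is at distance at least two: hence no such vertex exists.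
-/

namespace SimpleGraph

variable {V W X : Type*} {G : SimpleGraph V}

def Embedding.sumOfSeparated {H : SimpleGraph W} {K : SimpleGraph X} (f : H ↪g G) (g : K ↪g G)
    (hfg : ∀ x y, f x ≠ g y ∧ ¬G.Adj (f x) (g y)) : H ⊕g K ↪g G where
  toFun := Sum.elim f g
  inj' := f.injective.sumElim g.injective fun x y => (hfg x y).1
  map_rel_iff' {a b} := by
    rcases a with x | y <;> rcases b with x' | y'
    · simp
    · simpa using (hfg x y').2
    · simpa [G.adj_comm] using (hfg x' y).2
    · simp

def Adj.topEmbedding {u v : V} (h : G.Adj u v) : (⊤ : SimpleGraph (Fin 2)) ↪g G where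
  toFun := ![u, v]
  inj' i j hij := by
    fin_cases i <;> fin_cases j <;> simp_all [h.ne, h.ne.symm]
  map_rel_iff' {i j} := by
    change G.Adj (![u, v] i) (![u, v] j) ↔ _
    fin_cases i <;> fin_cases j <;> simp [h, h.symm]

lemma Adj.range_topEmbedding {u v : V} (h : G.Adj u v) :
    Set.range h.topEmbedding = {u, v} := by
  change Set.range ![u, v] = _
  simp [Set.pair_comm]

end SimpleGraph

open SimpleGraph

def P3kP2.succIso (n : ℕ) : P3kP2 (n + 1) ≃g P3kP2 n ⊕g (⊤ : SimpleGraph (Fin 2)) where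
  toEquiv :=
    (Equiv.sumCongr (.refl _)
      ((Equiv.prodCongr (finSuccEquivLast.trans (Equiv.optionEquivSumPUnit.{0} _)) (.refl _)).trans
        ((Equiv.sumProdDistrib _ _ _).trans (Equiv.sumCongr (.refl _) (Equiv.punitProd _))))).trans
    (Equiv.sumAssoc _ _ _).symm
  map_rel_iff' {a b} := by
    rcases a with a | ⟨i, j⟩ <;> rcases b with b | ⟨i', j'⟩ <;>
      (try induction i using Fin.lastCases) <;> (try induction i' using Fin.lastCases) <;>
      simp [P3kP2, Fin.ext_iff] <;> omega

section distToSet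

variable {V : Type*} {G : SimpleGraph V} {A : Set V} {u v a : V}

lemma distToSet_le_dist (ha : a ∈ A) : distToSet G v A ≤ G.dist v a :=
  Nat.sInf_le ⟨a, ha, rfl⟩

lemma exists_dist_eq_distToSet (hA : A.Nonempty) (v : V) :
    ∃ a ∈ A, G.dist v a = distToSet G v A :=
  Nat.sInf_mem (hA.image _)

lemma distToSet_eq_zero_iff (hG : G.Connected) (hA : A.Nonempty) :
    distToSet G v A = 0 ↔ v ∈ A := by
  refine ⟨fun h => ?_, fun hv => Nat.eq_zero_of_le_zero ?_⟩
  · obtain ⟨a, ha, hva⟩ := exists_dist_eq_distToSet (G := G) hA v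
    rwa [hG.dist_eq_zero_iff.mp (hva.trans h)]
  · simpa using distToSet_le_dist (G := G) (v := v) hv

lemma SimpleGraph.Adj.distToSet_le_add_one (hG : G.Connected) (hA : A.Nonempty) (h : G.Adj u v) :
    distToSet G u A ≤ distToSet G v A + 1 := by
  obtain ⟨a, ha, hva⟩ := exists_dist_eq_distToSet (G := G) hA v
  calc distToSet G u A ≤ G.dist u a := distToSet_le_dist ha
    _ ≤ G.dist u v + G.dist v a := hG.dist_triangle
    _ = distToSet G v A + 1 := by rw [dist_eq_one_iff_adj.mpr h, hva, add_comm]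

lemma ne_and_not_adj_of_two_le_distToSet (hv : 2 ≤ distToSet G v A) (ha : a ∈ A) :
    a ≠ v ∧ ¬G.Adj a v := by
  have hle := distToSet_le_dist (G := G) (v := v) ha
  refine ⟨?_, fun h => ?_⟩
  · rintro rfl
    simp at hle
    omega
  · rw [dist_eq_one_iff_adj.mpr h.symm] at hle
    omega

end distToSet

section P3kP2Free

variable {V : Type*} {G : SimpleGraph V} {n : ℕ}

lemma not_adj_of_two_le_distToSet (hfree : HFree G (P3kP2 (n + 1))) (f : P3kP2 n ↪g G)
    {u v : V} (hu : 2 ≤ distToSet G u (Set.range f)) (hv : 2 ≤ distToSet G v (Set.range f)) :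
    ¬G.Adj u v := by
  intro h
  have hsep : ∀ x y, f x ≠ h.topEmbedding y ∧ ¬G.Adj (f x) (h.topEmbedding y) := by
    intro x y
    have hy : h.topEmbedding y ∈ ({u, v} : Set V) := h.range_topEmbedding ▸ Set.mem_range_self y
    rcases hy with hy | hy <;> rw [hy]
    exacts [ne_and_not_adj_of_two_le_distToSet hu (Set.mem_range_self x),
      ne_and_not_adj_of_two_le_distToSet hv (Set.mem_range_self x)]
  exact hfree.false <|
    (f.sumOfSeparated h.topEmbedding hsep).comp (P3kP2.succIso n).toEmbedding

lemma distToSet_le_two (hG : G.Connected) (hfree : HFree G (P3kP2 (n + 1)))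
    (f : P3kP2 n ↪g G) (v : V) : distToSet G v (Set.range f) ≤ 2 := by
  by_contra! hv
  have hA : (Set.range f).Nonempty := Set.range_nonempty _
  have hvA : f (.inl 0) ≠ v := (ne_and_not_adj_of_two_le_distToSet hv.le ⟨_, rfl⟩).1
  have : Nontrivial V := ⟨⟨_, _, hvA⟩⟩
  obtain ⟨w, hvw⟩ := hG.preconnected.exists_adj_of_nontrivial v
  have hw := hvw.distToSet_le_add_one hG hA
  exact not_adj_of_two_le_distToSet hfree f hv.le (by omega) hvw

end P3kP2Free

theorem stmt1_general
    {V : Type*} (k : ℕ) (hk : 1 ≤ k) (G : SimpleGraph V)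
    (hconn : G.Connected) (hfree : HFree G (P3kP2 k))
    (A : Set V) (hA : ∃ f : P3kP2 (k-1) ↪g G, Set.range f = A)
    (B C : Set V) (hB : B = {v | distToSet G v A = 1})
    (hC : C = {v | distToSet G v A = 2}) :
    (∀ v : V, v ∈ A ∨ v ∈ B ∨ v ∈ C) ∧ Disjoint A B ∧ Disjoint A C ∧ Disjoint B C ∧
      IsStable G C := by
  obtain ⟨n, rfl⟩ := Nat.exists_eq_add_of_le' hk
  obtain ⟨f, rfl⟩ := hA
  subst hB hC
  have hzero := fun v => distToSet_eq_zero_iff (v := v) hconn (Set.range_nonempty f)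
  refine ⟨fun v => ?_, ?_, ?_, ?_, ?_⟩
  · have := distToSet_le_two hconn hfree f v
    interval_cases h : distToSet G v (Set.range f)
    exacts [.inl ((hzero v).mp h), .inr (.inl h), .inr (.inr h)]
  · exact Set.disjoint_left.mpr fun v hv (h : _ = 1) => by simp [(hzero v).mpr hv] at h
  · exact Set.disjoint_left.mpr fun v hv (h : _ = 2) => by simp [(hzero v).mpr hv] at h
  · exact Set.disjoint_left.mpr fun v (h₁ : _ = 1) (h₂ : _ = 2) => by omega
  · exact fun u (hu : _ = 2) v (hv : _ = 2) _ => not_adj_of_two_le_distToSet hfree f hu.ge hv.ge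

theorem stmt1
    {V : Type*} [Fintype V] (k : ℕ) (hk : 1 ≤ k) (G : SimpleGraph V)
    (hconn : G.Connected) (hfree : HFree G (P3kP2 k))
    (A : Set V) (hA : ∃ f : P3kP2 (k-1) ↪g G, Set.range f = A)
    (B C : Set V) (hB : B = {v | distToSet G v A = 1})
    (hC : C = {v | distToSet G v A = 2}) :
    (∀ v : V, v ∈ A ∨ v ∈ B ∨ v ∈ C) ∧ Disjoint A B ∧ Disjoint A C ∧ Disjoint B C ∧
      IsStable G C :=
  stmt1_general k hk G hconn hfree A hA B C hB hC
end

section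
/- Let k ≥ 1, let G be a finite connected simple graph that is (P3+kP2)-free and contains a vertex set A inducing P3+(k-1)P2. Let c1 be a regular vertex of G. If a vertex v not belonging to the closed neighbourhood N[c1] is adjacent to some vertex of the open neighbourhood N(c1), then there exists a regular vertex c of G such that v is adjacent to every vertex of N(c). -/
open SimpleGraph

/-!
If no regular vertex had its whole neighbourhood inside `N(v)`, then, since each witness `cᵢ` of
the regularity of `c₁` is itself regular (swap it with `c₁`), every `cᵢ` would have a neighbour
`bᵢ` not adjacent to `v`. As `c₁` and the `cᵢ` are pairwise at distance at least four, the path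
`v w c₁` and the edges `cᵢ bᵢ` would then induce `P₃ + kP₂`.
-/

namespace SimpleGraph

variable {V W : Type*} {G : SimpleGraph V}

def Separated (G : SimpleGraph V) (x y : V) : Prop :=
  x ≠ y ∧ ¬G.Adj x y

theorem Separated.symm {x y : V} (h : G.Separated x y) : G.Separated y x :=
  ⟨h.1.symm, fun hyx => h.2 hyx.symm⟩

theorem separated_of_two_le_dist {x y : V} (h : 2 ≤ G.dist x y) : G.Separated x y := by
  refine ⟨?_, fun hxy => ?_⟩
  · rintro rfl
    simp at h
  · rw [dist_eq_one_iff_adj.2 hxy] at h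
    omega

theorem Connected.le_dist_of_add_le_dist (hG : G.Connected) {a a' x y : V} {n : ℕ}
    (h : n + G.dist a x + G.dist a' y ≤ G.dist a a') : n ≤ G.dist x y := by
  have h₁ : G.dist a a' ≤ G.dist a x + G.dist x a' := hG.dist_triangle
  have h₂ : G.dist x a' ≤ G.dist x y + G.dist y a' := hG.dist_triangle
  rw [dist_comm (u := y)] at h₂
  omega

theorem Connected.separated_of_four_le_dist (hG : G.Connected) {a a' x y : V}
    (h : 4 ≤ G.dist a a') (hxy : G.dist a x + G.dist a' y ≤ 2) : G.Separated x y :=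
  separated_of_two_le_dist (hG.le_dist_of_add_le_dist (a := a) (a' := a') (by omega))

def Embedding.ofSeparated {H : SimpleGraph W} (f : W → V)
    (hadj : ∀ ⦃x y⦄, H.Adj x y → G.Adj (f x) (f y))
    (hsep : ∀ ⦃x y⦄, x ≠ y → ¬H.Adj x y → G.Separated (f x) (f y)) : H ↪g G where
  toFun := f
  inj' x y hxy := by
    by_contra hne
    by_cases hH : H.Adj x y
    · exact G.irrefl (hxy ▸ hadj hH)
    · exact (hsep hne hH).1 hxy
  map_rel_iff' {x y} := by
    refine ⟨fun h => ?_, fun h => hadj h⟩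
    by_contra hH
    have hne : x ≠ y := by
      rintro rfl
      exact G.irrefl h
    exact (hsep hne hH).2 h

end SimpleGraph

section P3kP2

variable {k : ℕ}

@[simp]
theorem P3kP2_adj_inl_inl {a b : Fin 3} :
    (P3kP2 k).Adj (.inl a) (.inl b) ↔ (a : ℕ) + 1 = b ∨ (b : ℕ) + 1 = a := by
  simp only [P3kP2, fromRel_adj, ne_eq, Sum.inl.injEq, Fin.ext_iff]
  omega

@[simp]
theorem P3kP2_adj_inr_inr {p q : Fin k × Fin 2} :
    (P3kP2 k).Adj (.inr p) (.inr q) ↔ p.1 = q.1 ∧ p.2 ≠ q.2 := by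
  simp only [P3kP2, fromRel_adj]
  grind

@[simp]
theorem P3kP2_not_adj_inl_inr {a : Fin 3} {p : Fin k × Fin 2} :
    ¬(P3kP2 k).Adj (.inl a) (.inr p) := by
  simp [P3kP2]

@[simp]
theorem P3kP2_not_adj_inr_inl {a : Fin 3} {p : Fin k × Fin 2} :
    ¬(P3kP2 k).Adj (.inr p) (.inl a) := by
  simp [P3kP2]

theorem nonempty_P3kP2_embedding {V : Type*} {G : SimpleGraph V} {x₀ x₁ x₂ : V}
    {y z : Fin k → V} (h₀₁ : G.Adj x₀ x₁) (h₁₂ : G.Adj x₁ x₂) (h₀₂ : G.Separated x₀ x₂)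
    (hyz : ∀ i, G.Adj (y i) (z i))
    (hpath : ∀ i, ∀ u ∈ ({x₀, x₁, x₂} : Set V), G.Separated u (y i) ∧ G.Separated u (z i))
    (hedges : ∀ i j, i ≠ j →
      G.Separated (y i) (y j) ∧ G.Separated (y i) (z j) ∧ G.Separated (z i) (z j)) :
    Nonempty (P3kP2 k ↪g G) := by
  set x : Fin 3 → V := ![x₀, x₁, x₂]
  set e : Fin k → Fin 2 → V := fun i => ![y i, z i]
  have hx : ∀ a, x a ∈ ({x₀, x₁, x₂} : Set V) := by
    intro a; fin_cases a <;> simp [x]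
  have hpath' : ∀ a i s, G.Separated (x a) (e i s) := by
    intro a i s
    fin_cases s
    exacts [(hpath i _ (hx a)).1, (hpath i _ (hx a)).2]
  have hedges' : ∀ i j, i ≠ j → ∀ s t, G.Separated (e i s) (e j t) := by
    intro i j hij s t
    obtain ⟨hyy, hyz', hzz⟩ := hedges i j hij
    fin_cases s <;> fin_cases t
    exacts [hyy, hyz', (hedges j i hij.symm).2.1.symm, hzz]
  refine ⟨Embedding.ofSeparated (Sum.elim x fun p => e p.1 p.2) (fun u u' h => ?_)
    (fun u u' hne h => ?_)⟩
  · rcases u with a | ⟨i, s⟩ <;> rcases u' with a' | ⟨j, t⟩ <;> simp at h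
    · fin_cases a <;> fin_cases a' <;> simp [x, h₀₁, h₁₂, h₀₁.symm, h₁₂.symm] at h ⊢
    · obtain ⟨rfl, hst⟩ := h
      fin_cases s <;> fin_cases t <;> simp [e, hyz, (hyz _).symm] at hst ⊢
  · rcases u with a | ⟨i, s⟩ <;> rcases u' with a' | ⟨j, t⟩
    · have h₀₂' := h₀₂.symm
      fin_cases a <;> fin_cases a' <;> simp_all [x]
    · exact hpath' a j t
    · exact (hpath' a' i s).symm
    · obtain rfl | hij := eq_or_ne i j
      · fin_cases s <;> fin_cases t <;> simp_all
      · exact hedges' i j hij s t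

end P3kP2

theorem isRegularVertex_swap {V : Type*} {G : SimpleGraph V} {k : ℕ} {A : Set V} {c₁ : V}
    {c : Fin k → V} (hc₁ : c₁ ∈ cliqueDistTwo G A) (hc : ∀ i, c i ∈ cliqueDistTwo G A)
    (hc₁c : ∀ i, 4 ≤ G.dist c₁ (c i)) (hcc : ∀ i j, i ≠ j → 4 ≤ G.dist (c i) (c j))
    (i : Fin k) : IsRegularVertex G k A (c i) := by
  refine ⟨hc i, Function.update c i c₁, fun j => ?_, fun j => ?_, fun j j' hjj' => ?_⟩
  · by_cases hji : j = i <;> simp [hji, hc₁, hc]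
  · by_cases hji : j = i
    · simpa [hji, SimpleGraph.dist_comm] using hc₁c i
    · simpa [hji] using hcc i j (Ne.symm hji)
  · by_cases hji : j = i <;> by_cases hj'i : j' = i
    · exact absurd (hji.trans hj'i.symm) hjj'
    · simpa [hji, hj'i] using hc₁c j'
    · simpa [hji, hj'i, SimpleGraph.dist_comm] using hc₁c j
    · simpa [hji, hj'i] using hcc j j' hjj'

theorem nonempty_P3kP2_embedding_of_four_le_dist {V : Type*} {G : SimpleGraph V} {k : ℕ}
    (hG : G.Connected) {v w c₁ : V} {c b : Fin k → V}
    (hc₁c : ∀ i, 4 ≤ G.dist c₁ (c i)) (hcc : ∀ i j, i ≠ j → 4 ≤ G.dist (c i) (c j))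
    (hvw : G.Adj v w) (hw : G.Adj c₁ w) (hv : G.Separated v c₁)
    (hb : ∀ i, G.Adj (c i) (b i)) (hvb : ∀ i, ¬G.Adj v (b i)) :
    Nonempty (P3kP2 k ↪g G) := by
  have dw : G.dist c₁ w = 1 := dist_eq_one_iff_adj.2 hw
  have dv : G.dist c₁ v ≤ 2 := by
    have : G.dist c₁ v ≤ G.dist c₁ w + G.dist w v := hG.dist_triangle
    rw [dist_eq_one_iff_adj.2 hvw.symm] at this
    omega
  have db (i : Fin k) : G.dist (c i) (b i) = 1 := dist_eq_one_iff_adj.2 (hb i)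
  refine nonempty_P3kP2_embedding hvw hw.symm hv hb (fun i u hu => ?_) (fun i j hij => ?_)
  · have h := hc₁c i
    rcases hu with rfl | rfl | rfl
    · -- `u = v` and `bᵢ` may be at distance 3, so only distinctness comes from distances
      refine ⟨hG.separated_of_four_le_dist h (by simpa using dv), fun hub => ?_, hvb i⟩
      have : 1 ≤ G.dist u (b i) :=
        hG.le_dist_of_add_le_dist (a := c₁) (a' := c i) (by rw [db]; omega)
      simp [hub] at this
    · exact ⟨hG.separated_of_four_le_dist h (by simp [dw]),
        hG.separated_of_four_le_dist h (by simp [dw, db])⟩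
    · exact ⟨hG.separated_of_four_le_dist h (by simp),
        hG.separated_of_four_le_dist h (by simp [db])⟩
  · have h := hcc i j hij
    exact ⟨hG.separated_of_four_le_dist h (by simp),
      hG.separated_of_four_le_dist h (by simp [db]),
      hG.separated_of_four_le_dist h (by simp [db])⟩

theorem stmt2_general
    {V : Type*} (k : ℕ) (G : SimpleGraph V)
    (hconn : G.Connected) (hfree : HFree G (P3kP2 k))
    (A : Set V)
    (c₁ : V) (hc₁ : IsRegularVertex G k A c₁)
    (v : V) (hv : v ∉ insert c₁ (G.neighborSet c₁))
    (hadj : ∃ w ∈ G.neighborSet c₁, G.Adj v w) :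
    ∃ c : V, IsRegularVertex G k A c ∧ ∀ w ∈ G.neighborSet c, G.Adj v w := by
  obtain ⟨hc₁C, c, hcC, hc₁c, hcc⟩ := hc₁
  obtain ⟨w, hw, hvw⟩ := hadj
  rw [Set.mem_insert_iff, mem_neighborSet, not_or] at hv
  by_contra! hcon
  choose b hb hvb using fun i => hcon (c i) (isRegularVertex_swap hc₁C hcC hc₁c hcc i)
  obtain ⟨F⟩ := nonempty_P3kP2_embedding_of_four_le_dist hconn hc₁c hcc hvw hw
    ⟨hv.1, fun h => hv.2 h.symm⟩ hb hvb
  exact hfree.false F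

theorem stmt2
    {V : Type*} [Fintype V] (k : ℕ) (hk : 1 ≤ k) (G : SimpleGraph V)
    (hconn : G.Connected) (hfree : HFree G (P3kP2 k))
    (A : Set V) (hA : ∃ f : P3kP2 (k-1) ↪g G, Set.range f = A)
    (c₁ : V) (hc₁ : IsRegularVertex G k A c₁)
    (v : V) (hv : v ∉ insert c₁ (G.neighborSet c₁))
    (hadj : ∃ w ∈ G.neighborSet c₁, G.Adj v w) :
    ∃ c : V, IsRegularVertex G k A c ∧ ∀ w ∈ G.neighborSet c, G.Adj v w :=
  stmt2_general k G hconn hfree A c₁ hc₁ v hv hadj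
end

section
/- Let k ≥ 1, let G be a finite connected simple graph that is (P3+kP2)-free and contains a vertex set A inducing P3+(k-1)P2. Let D be a minimum dominating set of G and let c1 be a regular vertex of G. Then |D ∩ N[c1]| = 1. -/
open SimpleGraph

private lemma adj_dist_le' {V : Type*} {G : SimpleGraph V} {x y : V} (h : G.Adj x y) :
    G.dist x y ≤ 1 := by
  simpa using SimpleGraph.dist_le h.toWalk

private lemma far_ne' {V : Type*} {G : SimpleGraph V} (hconn : G.Connected) {p q x y : V}
    {mx my : ℕ} (hpq : 4 ≤ G.dist p q) (hx : G.dist p x ≤ mx) (hy : G.dist q y ≤ my)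
    (hm : mx + my ≤ 3) : x ≠ y := by
  rintro rfl
  have h1 := hconn.dist_triangle (u := p) (v := x) (w := q)
  rw [SimpleGraph.dist_comm (u := x) (v := q)] at h1
  omega

private lemma far_nadj' {V : Type*} {G : SimpleGraph V} (hconn : G.Connected) {p q x y : V}
    {mx my : ℕ} (hpq : 4 ≤ G.dist p q) (hx : G.dist p x ≤ mx) (hy : G.dist q y ≤ my)
    (hm : mx + my ≤ 2) : ¬ G.Adj x y := by
  intro h
  have h1 := hconn.dist_triangle (u := p) (v := x) (w := q)
  have h2 := hconn.dist_triangle (u := x) (v := y) (w := q)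
  have h3 : G.dist x y ≤ 1 := adj_dist_le' h
  rw [SimpleGraph.dist_comm (u := y) (v := q)] at h2
  omega

private lemma P3kP2_adj_ll {k : ℕ} {a b : Fin 3} :
    (P3kP2 k).Adj (Sum.inl a) (Sum.inl b) ↔ ((b : ℕ) = (a : ℕ) + 1 ∨ (a : ℕ) = (b : ℕ) + 1) := by
  simp only [P3kP2, SimpleGraph.fromRel_adj]
  constructor
  · rintro ⟨-, h⟩; exact h
  · intro h
    refine ⟨?_, h⟩
    intro heq
    rw [Sum.inl.injEq] at heq
    subst heq
    rcases h with h | h <;> omega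

private lemma P3kP2_adj_lr {k : ℕ} {a : Fin 3} {p : Fin k × Fin 2} :
    ¬ (P3kP2 k).Adj (Sum.inl a) (Sum.inr p) := by
  simp [P3kP2, SimpleGraph.fromRel_adj]

private lemma P3kP2_adj_rl {k : ℕ} {a : Fin 3} {p : Fin k × Fin 2} :
    ¬ (P3kP2 k).Adj (Sum.inr p) (Sum.inl a) := by
  simp [P3kP2, SimpleGraph.fromRel_adj]

private lemma P3kP2_adj_rr {k : ℕ} {i j : Fin k} {s t : Fin 2} :
    (P3kP2 k).Adj (Sum.inr (i, s)) (Sum.inr (j, t)) ↔ (i = j ∧ s ≠ t) := by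
  simp only [P3kP2, SimpleGraph.fromRel_adj]
  constructor
  · rintro ⟨hne, (⟨h1, h2⟩ | ⟨h1, h2⟩)⟩
    · exact ⟨h1, h2⟩
    · exact ⟨h1.symm, h2.symm⟩
  · rintro ⟨rfl, hst⟩
    exact ⟨by simp [hst], Or.inl ⟨rfl, hst⟩⟩

private lemma embed_helper {V : Type*} {G : SimpleGraph V} {k : ℕ}
    (w u v : V) (c x : Fin k → V)
    (hwu : G.Adj w u) (huv : G.Adj u v) (hwv_ne : w ≠ v) (hwv : ¬ G.Adj w v)
    (hcx : ∀ i, G.Adj (c i) (x i))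
    (hwc : ∀ i, w ≠ c i ∧ ¬ G.Adj w (c i)) (hwx : ∀ i, w ≠ x i ∧ ¬ G.Adj w (x i))
    (huc : ∀ i, u ≠ c i ∧ ¬ G.Adj u (c i)) (hux : ∀ i, u ≠ x i ∧ ¬ G.Adj u (x i))
    (hvc : ∀ i, v ≠ c i ∧ ¬ G.Adj v (c i)) (hvx : ∀ i, v ≠ x i ∧ ¬ G.Adj v (x i))
    (hcc : ∀ i j, i ≠ j → c i ≠ c j ∧ ¬ G.Adj (c i) (c j))
    (hcxp : ∀ i j, i ≠ j → c i ≠ x j ∧ ¬ G.Adj (c i) (x j))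
    (hxx : ∀ i j, i ≠ j → x i ≠ x j ∧ ¬ G.Adj (x i) (x j)) :
    Nonempty (P3kP2 k ↪g G) := by
  classical
  refine ⟨⟨⟨fun z => match z with
    | Sum.inl a => if (a : ℕ) = 0 then w else if (a : ℕ) = 1 then u else v
    | Sum.inr (i, s) => if (s : ℕ) = 0 then c i else x i, ?_⟩, ?_⟩⟩
  · rintro (a | ⟨i, s⟩) (b | ⟨j, t⟩) hab
    · fin_cases a <;> fin_cases b <;>
        first
          | rfl
          | exact absurd hab hwu.ne
          | exact absurd hab hwv_ne
          | exact absurd hab huv.ne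
          | exact absurd hab.symm hwu.ne
          | exact absurd hab.symm hwv_ne
          | exact absurd hab.symm huv.ne
    · exfalso
      fin_cases a <;> fin_cases t <;>
        first
          | exact (hwc j).1 hab
          | exact (hwx j).1 hab
          | exact (huc j).1 hab
          | exact (hux j).1 hab
          | exact (hvc j).1 hab
          | exact (hvx j).1 hab
    · exfalso
      fin_cases b <;> fin_cases s <;>
        first
          | exact (hwc i).1 hab.symm
          | exact (hwx i).1 hab.symm
          | exact (huc i).1 hab.symm
          | exact (hux i).1 hab.symm
          | exact (hvc i).1 hab.symm
          | exact (hvx i).1 hab.symm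
    · fin_cases s <;> fin_cases t
      · have hij : i = j := by
          by_contra hne; exact (hcc i j hne).1 hab
        subst hij; rfl
      · exfalso
        by_cases hij : i = j
        · subst hij; exact (hcx i).ne hab
        · exact (hcxp i j hij).1 hab
      · exfalso
        by_cases hij : i = j
        · subst hij; exact (hcx i).ne hab.symm
        · exact (hcxp j i (Ne.symm hij)).1 hab.symm
      · have hij : i = j := by
          by_contra hne; exact (hxx i j hne).1 hab
        subst hij; rfl
  · rintro (a | ⟨i, s⟩) (b | ⟨j, t⟩)
    · rw [P3kP2_adj_ll]
      fin_cases a <;> fin_cases b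
      · exact iff_of_false (G.irrefl) (by decide)
      · exact iff_of_true hwu (by decide)
      · exact iff_of_false hwv (by decide)
      · exact iff_of_true hwu.symm (by decide)
      · exact iff_of_false (G.irrefl) (by decide)
      · exact iff_of_true huv (by decide)
      · exact iff_of_false (fun h => hwv h.symm) (by decide)
      · exact iff_of_true huv.symm (by decide)
      · exact iff_of_false (G.irrefl) (by decide)
    · refine iff_of_false ?_ P3kP2_adj_lr
      fin_cases a <;> fin_cases t <;>
        first
          | exact (hwc j).2
          | exact (hwx j).2
          | exact (huc j).2
          | exact (hux j).2
          | exact (hvc j).2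
          | exact (hvx j).2
    · refine iff_of_false ?_ P3kP2_adj_rl
      fin_cases b <;> fin_cases s <;>
        first
          | exact fun h => (hwc i).2 h.symm
          | exact fun h => (hwx i).2 h.symm
          | exact fun h => (huc i).2 h.symm
          | exact fun h => (hux i).2 h.symm
          | exact fun h => (hvc i).2 h.symm
          | exact fun h => (hvx i).2 h.symm
    · rw [P3kP2_adj_rr]
      by_cases hij : i = j
      · subst hij
        fin_cases s <;> fin_cases t
        · exact iff_of_false (G.irrefl) (by simp)
        · exact iff_of_true (hcx i) ⟨rfl, by decide⟩
        · exact iff_of_true (hcx i).symm ⟨rfl, by decide⟩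
        · exact iff_of_false (G.irrefl) (by simp)
      · refine iff_of_false ?_ (fun h => hij h.1)
        fin_cases s <;> fin_cases t
        · exact (hcc i j hij).2
        · exact (hcxp i j hij).2
        · exact fun h => (hcxp j i (Ne.symm hij)).2 h.symm
        · exact (hxx i j hij).2

theorem stmt3
    {V : Type*} [Fintype V] (k : ℕ) (hk : 1 ≤ k) (G : SimpleGraph V)
    (hconn : G.Connected) (hfree : HFree G (P3kP2 k))
    (A : Set V) (hA : ∃ f : P3kP2 (k-1) ↪g G, Set.range f = A)
    (D : Set V) (hD : IsMinDomSet G D)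
    (c₁ : V) (hc₁ : IsRegularVertex G k A c₁) :
    (D ∩ insert c₁ (G.neighborSet c₁)).ncard = 1 := by
  classical
  obtain ⟨⟨hd₁, hcl₁⟩, c, hcC, hfar₁, hfarp⟩ := hc₁
  obtain ⟨hDdom, hDmin⟩ := hD
  have hfree' : IsEmpty (P3kP2 k ↪g G) := hfree
  have hdistN : ∀ z ∈ insert c₁ (G.neighborSet c₁), G.dist c₁ z ≤ 1 := by
    intro z hz
    rcases Set.mem_insert_iff.mp hz with rfl | hz
    · simp [SimpleGraph.dist_self]
    · exact adj_dist_le' (show G.Adj c₁ z from hz)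
  have hNadj : ∀ u ∈ insert c₁ (G.neighborSet c₁), ∀ v ∈ insert c₁ (G.neighborSet c₁),
      u ≠ v → G.Adj u v := by
    intro u hu v hv huv
    rcases Set.mem_insert_iff.mp hu with rfl | hu
    · rcases Set.mem_insert_iff.mp hv with rfl | hv
      · exact absurd rfl huv
      · exact hv
    · rcases Set.mem_insert_iff.mp hv with rfl | hv
      · exact (show G.Adj v u from hu).symm
      · exact hcl₁ hu hv huv
  have hAne : A.Nonempty := by
    obtain ⟨f, hf⟩ := hA
    exact ⟨f (Sum.inl 0), hf ▸ Set.mem_range_self _⟩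
  have hnbr : ∀ i, ∃ x, G.Adj (c i) x := by
    intro i
    have h2 : distToSet G (c i) A = 2 := (hcC i).1
    unfold distToSet at h2
    have hmem := Nat.sInf_mem (hAne.image (G.dist (c i)))
    rw [h2] at hmem
    obtain ⟨a, -, ha⟩ := hmem
    have hne : c i ≠ a := by rintro rfl; rw [SimpleGraph.dist_self] at ha; omega
    obtain ⟨p⟩ := hconn.preconnected (c i) a
    cases p with
    | nil => exact absurd rfl hne
    | cons h _ => exact ⟨_, h⟩
  have hd0 : ∀ i : Fin k, G.dist (c i) (c i) ≤ 0 := fun i => by simp [SimpleGraph.dist_self]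
  -- main step: no two distinct vertices of D in N[c₁]
  have main : ∀ u v : V, u ∈ D ∩ insert c₁ (G.neighborSet c₁) →
      v ∈ D ∩ insert c₁ (G.neighborSet c₁) → u ≠ v → False := by
    intro u v hu hv huv
    obtain ⟨huD, huN⟩ := hu
    obtain ⟨hvD, hvN⟩ := hv
    have huv_adj : G.Adj u v := hNadj u huN v hvN huv
    have hdu := hdistN u huN
    have hdv := hdistN v hvN
    have hune_c : ∀ i, u ≠ c i := fun i => far_ne' hconn (hfar₁ i) hdu (hd0 i) (by norm_num)
    have hvne_c : ∀ i, v ≠ c i := fun i => far_ne' hconn (hfar₁ i) hdv (hd0 i) (by norm_num)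
    have hunadj : ∀ i, ¬ G.Adj u (c i) :=
      fun i => far_nadj' hconn (hfar₁ i) hdu (hd0 i) (by norm_num)
    have hprivfacts : ∀ w, (insert w (G.neighborSet w)) ∩ D = {u} →
        G.Adj w u ∧ ¬ G.Adj w v ∧ w ≠ v ∧ G.dist c₁ w ≤ 2 := by
      intro w hw
      have hwu_ne : w ≠ u := by
        rintro rfl
        have hv' : v ∈ (insert w (G.neighborSet w)) ∩ D :=
          ⟨Set.mem_insert_of_mem _ huv_adj, hvD⟩
        rw [hw] at hv'
        exact huv (Set.mem_singleton_iff.mp hv').symm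
      have hwu : G.Adj w u := by
        have hu' : u ∈ (insert w (G.neighborSet w)) ∩ D := by rw [hw]; exact rfl
        rcases Set.mem_insert_iff.mp hu'.1 with h | h
        · exact absurd h.symm hwu_ne
        · exact (show G.Adj w u from h)
      have hwnv : ¬ G.Adj w v := by
        intro h
        have hv' : v ∈ (insert w (G.neighborSet w)) ∩ D := ⟨Set.mem_insert_of_mem _ h, hvD⟩
        rw [hw] at hv'
        exact huv (Set.mem_singleton_iff.mp hv').symm
      have hwv_ne : w ≠ v := by
        rintro rfl
        have hv' : w ∈ (insert w (G.neighborSet w)) ∩ D := ⟨Set.mem_insert _ _, hvD⟩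
        rw [hw] at hv'
        exact huv (Set.mem_singleton_iff.mp hv').symm
      have hdw : G.dist c₁ w ≤ 2 := by
        have h1 := hconn.dist_triangle (u := c₁) (v := u) (w := w)
        have h2 : G.dist u w ≤ 1 := adj_dist_le' hwu.symm
        omega
      exact ⟨hwu, hwnv, hwv_ne, hdw⟩
    by_cases hcase : ∃ w, (insert w (G.neighborSet w)) ∩ D = {u} ∧
        ∀ i : Fin k, ∃ x, G.Adj (c i) x ∧ ¬ G.Adj x w
    · obtain ⟨w, hwpriv, hwx⟩ := hcase
      choose x hx1 hx2 using hwx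
      obtain ⟨hwu, hwnv, hwv_ne, hdw⟩ := hprivfacts w hwpriv
      have hxd : ∀ i, G.dist (c i) (x i) ≤ 1 := fun i => adj_dist_le' (hx1 i)
      obtain ⟨F⟩ := embed_helper w u v c x hwu huv_adj hwv_ne hwnv hx1
        (fun i => ⟨far_ne' hconn (hfar₁ i) hdw (hd0 i) (by norm_num),
          far_nadj' hconn (hfar₁ i) hdw (hd0 i) (by norm_num)⟩)
        (fun i => ⟨far_ne' hconn (hfar₁ i) hdw (hxd i) (by norm_num),
          fun h => hx2 i h.symm⟩)
        (fun i => ⟨hune_c i, hunadj i⟩)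
        (fun i => ⟨far_ne' hconn (hfar₁ i) hdu (hxd i) (by norm_num),
          far_nadj' hconn (hfar₁ i) hdu (hxd i) (by norm_num)⟩)
        (fun i => ⟨hvne_c i, far_nadj' hconn (hfar₁ i) hdv (hd0 i) (by norm_num)⟩)
        (fun i => ⟨far_ne' hconn (hfar₁ i) hdv (hxd i) (by norm_num),
          far_nadj' hconn (hfar₁ i) hdv (hxd i) (by norm_num)⟩)
        (fun i j hij => ⟨far_ne' hconn (hfarp i j hij) (hd0 i) (hd0 j) (by norm_num),
          far_nadj' hconn (hfarp i j hij) (hd0 i) (hd0 j) (by norm_num)⟩)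
        (fun i j hij => ⟨far_ne' hconn (hfarp i j hij) (hd0 i) (hxd j) (by norm_num),
          far_nadj' hconn (hfarp i j hij) (hd0 i) (hxd j) (by norm_num)⟩)
        (fun i j hij => ⟨far_ne' hconn (hfarp i j hij) (hxd i) (hxd j) (by norm_num),
          far_nadj' hconn (hfarp i j hij) (hxd i) (hxd j) (by norm_num)⟩)
      exact hfree'.false F
    · push_neg at hcase
      choose x hx using hnbr
      set S : Set (Fin k) := {i | D ∩ insert (c i) (G.neighborSet (c i)) = {c i}} with hS
      set R : Set V := insert u ((fun i => c i) '' S) with hR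
      set D' : Set V := (D \ R) ∪ (fun i => x i) '' S with hD'
      have hvinD' : v ∈ D' := by
        refine Or.inl ⟨hvD, ?_⟩
        intro hvR
        rcases Set.mem_insert_iff.mp hvR with h | ⟨i, _, h⟩
        · exact huv h.symm
        · exact hvne_c i h.symm
      have hxS_sub : ∀ i ∈ S, x i ∈ D' := fun i hi => Or.inr ⟨i, hi, rfl⟩
      have hSc : ∀ i ∈ S, c i ∈ D := by
        intro i hi
        have h1 : c i ∈ D ∩ insert (c i) (G.neighborSet (c i)) := by
          rw [show D ∩ insert (c i) (G.neighborSet (c i)) = {c i} from hi]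
          exact rfl
        exact h1.1
      have hdom' : IsDomSet G D' := by
        intro z hz
        by_cases hzu : z = u
        · subst hzu; exact ⟨v, hvinD', huv_adj.symm⟩
        by_cases hzD : z ∈ D
        · have hzR : z ∈ R := by
            by_contra hzR
            exact hz (Or.inl ⟨hzD, hzR⟩)
          rcases Set.mem_insert_iff.mp hzR with h | ⟨i, hi, h⟩
          · exact absurd h hzu
          · exact ⟨x i, hxS_sub i hi, h ▸ (hx i).symm⟩
        · by_cases hprv : (insert z (G.neighborSet z)) ∩ D = {u}
          · obtain ⟨i, hi⟩ := hcase z hprv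
            have hsub : ∀ d ∈ D ∩ insert (c i) (G.neighborSet (c i)), d = c i := by
              intro d hd
              rcases Set.mem_insert_iff.mp hd.2 with h | h
              · exact h
              · exfalso
                have hdz : G.Adj d z := hi d (show G.Adj (c i) d from h)
                have hmem : d ∈ (insert z (G.neighborSet z)) ∩ D :=
                  ⟨Set.mem_insert_of_mem _ hdz.symm, hd.1⟩
                rw [hprv] at hmem
                have hdu' : d = u := Set.mem_singleton_iff.mp hmem
                subst hdu'
                exact hunadj i ((show G.Adj (c i) d from h).symm)
            have hiS : i ∈ S := by
              have hciD : c i ∈ D := by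
                by_contra hciD
                obtain ⟨d, hdD, hdadj⟩ := hDdom (c i) hciD
                have hd' : d = c i := hsub d ⟨hdD, Set.mem_insert_of_mem _ hdadj.symm⟩
                exact G.irrefl (hd' ▸ hdadj)
              show D ∩ insert (c i) (G.neighborSet (c i)) = {c i}
              exact Set.eq_singleton_iff_unique_mem.mpr ⟨⟨hciD, Set.mem_insert _ _⟩, hsub⟩
            exact ⟨x i, hxS_sub i hiS, hi (x i) (hx i)⟩
          · have hnempty : ((insert z (G.neighborSet z)) ∩ D).Nonempty := by
              obtain ⟨d, hdD, hdadj⟩ := hDdom z hzD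
              exact ⟨d, Set.mem_insert_of_mem _ hdadj.symm, hdD⟩
            obtain ⟨d, hdmem, hdne⟩ : ∃ d ∈ (insert z (G.neighborSet z)) ∩ D, d ≠ u := by
              by_contra hcon
              push_neg at hcon
              exact hprv (Set.eq_singleton_iff_nonempty_unique_mem.mpr ⟨hnempty, hcon⟩)
            have hdD : d ∈ D := hdmem.2
            have hdz : G.Adj z d := by
              rcases Set.mem_insert_iff.mp hdmem.1 with h | h
              · exact absurd (h ▸ hdD) hzD
              · exact (show G.Adj z d from h)
            by_cases hdc : ∃ i ∈ S, c i = d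
            · obtain ⟨i, hiS, hci⟩ := hdc
              have hzN : z ∈ G.neighborSet (c i) := by
                rw [hci]; exact hdz.symm
              have hzxne : z ≠ x i := by
                rintro rfl; exact hz (hxS_sub i hiS)
              have hxiN : x i ∈ G.neighborSet (c i) := hx i
              have hadj : G.Adj z (x i) := (hcC i).2 hzN hxiN hzxne
              exact ⟨x i, hxS_sub i hiS, hadj.symm⟩
            · push_neg at hdc
              have hdD' : d ∈ D' := by
                refine Or.inl ⟨hdD, ?_⟩
                intro hdR
                rcases Set.mem_insert_iff.mp hdR with h | ⟨i, hi, h⟩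
                · exact hdne h
                · exact hdc i hi h
              exact ⟨d, hdD', hdz.symm⟩
      have hRD : R ⊆ D := by
        intro r hr
        rcases Set.mem_insert_iff.mp hr with h | ⟨i, hi, h⟩
        · exact h ▸ huD
        · exact h ▸ hSc i hi
      have hcInj : Set.InjOn (fun i => c i) S := by
        intro i _ j _ hij
        by_contra hne
        have h4 := hfarp i j hne
        have h0 : G.dist (c i) (c j) = 0 := by
          simp only at hij
          rw [hij, SimpleGraph.dist_self]
        omega
      have huImg : u ∉ (fun i => c i) '' S := by
        rintro ⟨i, hi, h⟩
        exact hune_c i h.symm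
      have hcardR : R.ncard = S.ncard + 1 := by
        rw [hR, Set.ncard_insert_of_notMem huImg (Set.toFinite _),
          Set.ncard_image_of_injOn hcInj]
      have h1 : D'.ncard ≤ (D \ R).ncard + ((fun i => x i) '' S).ncard :=
        Set.ncard_union_le _ _
      have h2 : (D \ R).ncard = D.ncard - R.ncard := Set.ncard_diff hRD (Set.toFinite _)
      have h3 : ((fun i => x i) '' S).ncard ≤ S.ncard :=
        Set.ncard_image_le (Set.toFinite _)
      have h4 : R.ncard ≤ D.ncard := Set.ncard_le_ncard hRD (Set.toFinite _)
      have h5 := hDmin D' hdom'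
      omega
  have hne : (D ∩ insert c₁ (G.neighborSet c₁)).Nonempty := by
    by_cases h : c₁ ∈ D
    · exact ⟨c₁, h, Set.mem_insert _ _⟩
    · obtain ⟨d, hdD, hdadj⟩ := hDdom c₁ h
      exact ⟨d, hdD, Set.mem_insert_of_mem _ hdadj.symm⟩
  obtain ⟨a, ha⟩ := hne
  have hsingle : D ∩ insert c₁ (G.neighborSet c₁) = {a} :=
    Set.eq_singleton_iff_unique_mem.mpr ⟨ha, fun y hy => by
      by_contra hne'
      exact main y a hy ha hne'⟩
  rw [hsingle, Set.ncard_singleton]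
end

section
/- Let k ≥ 1, let G be a finite connected simple graph that is (P3+kP2)-free and contains a vertex set A inducing P3+(k-1)P2. Let c1, …, c(k+1) be k+1 regular vertices of G which are pairwise at distance at least four from one another, and for every i in {1,…,k+1} let b_i be a neighbour of c_i. If D is a minimum dominating set of G, then (D \ (N[c1] ∪ … ∪ N[c(k+1)])) ∪ {b1, …, b(k+1)} is also a minimum dominating set of G. -/
open SimpleGraph

/-- Auxiliary function used to build the forbidden induced subgraph. -/
def embFun {V : Type*} {k : ℕ} (v u w : V) (C B : Fin k → V) : Fin 3 ⊕ Fin k × Fin 2 → V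
  | Sum.inl a => if a.val = 0 then v else if a.val = 1 then u else w
  | Sum.inr p => if p.2.val = 0 then C p.1 else B p.1

theorem stmt4
    {V : Type*} [Fintype V] (k : ℕ) (hk : 1 ≤ k) (G : SimpleGraph V)
    (hconn : G.Connected) (hfree : HFree G (P3kP2 k))
    (A : Set V) (hA : ∃ f : P3kP2 (k-1) ↪g G, Set.range f = A)
    (c : Fin (k+1) → V) (hreg : ∀ i, IsRegularVertex G k A (c i))
    (hdist : ∀ i j, i ≠ j → 4 ≤ G.dist (c i) (c j))
    (b : Fin (k+1) → V) (hb : ∀ i, b i ∈ G.neighborSet (c i))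
    (D : Set V) (hD : IsMinDomSet G D) :
    IsMinDomSet G ((D \ ⋃ i, insert (c i) (G.neighborSet (c i))) ∪ Set.range b) := by
  obtain ⟨hDdom, hDmin⟩ := hD
  set U : Set V := ⋃ i, insert (c i) (G.neighborSet (c i)) with hU
  -- basic metric helpers
  have hadj1 : ∀ x y : V, G.Adj x y → G.dist x y ≤ 1 := fun x y h =>
    (SimpleGraph.dist_eq_one_iff_adj.mpr h).le
  have hfar2 : ∀ x y : V, 2 ≤ G.dist x y → ¬ G.Adj x y := by
    intro x y h hadj
    have := (SimpleGraph.dist_eq_one_iff_adj.mpr hadj)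
    omega
  have hne1 : ∀ x y : V, 1 ≤ G.dist x y → x ≠ y := by
    intro x y h he
    subst he
    simp [SimpleGraph.dist_self] at h
  have tri : ∀ x y z : V, G.dist x z ≤ G.dist x y + G.dist y z := fun x y z =>
    hconn.dist_triangle
  have hcb : ∀ m, G.Adj (c m) (b m) := fun m => hb m
  -- distance facts between the special vertices
  have dcb' : ∀ m m' : Fin (k+1), m ≠ m' → 3 ≤ G.dist (c m) (b m') := by
    intro m m' hmm
    have h4 := hdist m m' hmm
    have h1 : G.dist (b m') (c m') ≤ 1 := hadj1 _ _ (hcb m').symm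
    have := tri (c m) (b m') (c m')
    omega
  have dbb : ∀ m m' : Fin (k+1), m ≠ m' → 2 ≤ G.dist (b m) (b m') := by
    intro m m' hmm
    have h3 := dcb' m m' hmm
    have h1 : G.dist (c m) (b m) ≤ 1 := hadj1 _ _ (hcb m)
    have hc : G.dist (c m) (b m') = G.dist (b m') (c m) := SimpleGraph.dist_comm
    have hc2 : G.dist (b m) (c m) = G.dist (c m) (b m) := SimpleGraph.dist_comm
    have := tri (c m) (b m) (b m')
    omega
  have hbnecc : ∀ m m' : Fin (k+1), m ≠ m' → b m ≠ c m' := by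
    intro m m' hmm
    have h := dcb' m' m (Ne.symm hmm)
    have := hne1 (c m') (b m) (by omega)
    exact fun h' => this h'.symm
  constructor
  · -- D' is dominating
    intro v hv
    by_cases hvU : v ∈ U
    · obtain ⟨i, hvi⟩ : ∃ i, v ∈ insert (c i) (G.neighborSet (c i)) := by
        simpa [hU] using hvU
      refine ⟨b i, Or.inr ⟨i, rfl⟩, ?_⟩
      rcases hvi with rfl | hvn
      · exact (hcb i).symm
      · have hne : v ≠ b i := fun h => hv (by rw [h]; exact Or.inr ⟨i, rfl⟩)
        exact (hreg i).1.2 (hb i) hvn hne.symm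
    · by_contra hcon
      push_neg at hcon
      have hvD : v ∉ D := fun h => hv (Or.inl ⟨h, hvU⟩)
      obtain ⟨u, huD, huv⟩ := hDdom v hvD
      have huU : u ∈ U := by
        by_contra h
        exact hcon u (Or.inl ⟨huD, h⟩) huv
      obtain ⟨i, hui⟩ : ∃ i, u ∈ insert (c i) (G.neighborSet (c i)) := by
        simpa [hU] using huU
      have hvNc : ∀ m, v ∉ insert (c m) (G.neighborSet (c m)) := by
        intro m hm
        exact hvU (Set.mem_iUnion.mpr ⟨m, hm⟩)
      have hvnc : ∀ m, v ≠ c m ∧ ¬ G.Adj (c m) v := by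
        intro m
        have := hvNc m
        simp only [Set.mem_insert_iff, SimpleGraph.mem_neighborSet, not_or] at this
        exact this
      have hune : u ≠ c i := by
        rintro rfl
        exact (hvnc i).2 huv
      have hcu : G.Adj (c i) u := by
        rcases hui with h | h
        · exact absurd h hune
        · exact h
      have hvb : ∀ m, ¬ G.Adj (b m) v ∧ v ≠ b m := by
        intro m
        refine ⟨hcon (b m) (Or.inr ⟨m, rfl⟩), fun h => ?_⟩
        exact hv (by rw [h]; exact Or.inr ⟨m, rfl⟩)
      -- more distance facts involving u
      have duc : ∀ m, m ≠ i → 3 ≤ G.dist u (c m) := by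
        intro m hmi
        have h4 := hdist i m (Ne.symm hmi)
        have h1 : G.dist (c i) u ≤ 1 := hadj1 _ _ hcu
        have := tri (c i) u (c m)
        omega
      have dub : ∀ m, m ≠ i → 2 ≤ G.dist u (b m) := by
        intro m hmi
        have h3 := duc m hmi
        have h1 : G.dist (b m) (c m) ≤ 1 := hadj1 _ _ (hcb m).symm
        have := tri u (b m) (c m)
        have hc : G.dist (c m) (u) = G.dist u (c m) := SimpleGraph.dist_comm
        omega
      -- build the forbidden induced subgraph
      set σ : Fin k → Fin (k+1) := i.succAbove with hσ
      have hσne : ∀ j, σ j ≠ i := fun j => i.succAbove_ne j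
      have hσinj : Function.Injective σ := Fin.succAbove_right_injective
      set f : Fin 3 ⊕ Fin k × Fin 2 → V :=
        embFun v u (c i) (fun j => c (σ j)) (fun j => b (σ j)) with hf
      have hcne : ∀ m m' : Fin (k+1), m ≠ m' → c m ≠ c m' := by
        intro m m' hmm
        exact hne1 _ _ (by have := hdist m m' hmm; omega)
      have hbne : ∀ m m' : Fin (k+1), m ≠ m' → b m ≠ b m' := by
        intro m m' hmm
        exact hne1 _ _ (by have := dbb m m' hmm; omega)
      have hvu : v ≠ u := huv.ne'
      have hucm : ∀ m, m ≠ i → u ≠ c m := fun m hm => hne1 _ _ (by have := duc m hm; omega)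
      have hubm : ∀ m, m ≠ i → u ≠ b m := fun m hm => hne1 _ _ (by have := dub m hm; omega)
      have hcibm : ∀ m, m ≠ i → c i ≠ b m := fun m hm h => hbnecc m i hm h.symm
      have hcmbm : ∀ m : Fin (k+1), c m ≠ b m := fun m => (hcb m).ne
      have nvb : ∀ m, ¬ G.Adj v (b m) := fun m h => (hvb m).1 h.symm
      have nvc : ∀ m, ¬ G.Adj v (c m) := fun m h => (hvnc m).2 h.symm
      have nuc : ∀ m, m ≠ i → ¬ G.Adj u (c m) := fun m hm =>
        hfar2 _ _ (by have := duc m hm; omega)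
      have nub : ∀ m, m ≠ i → ¬ G.Adj u (b m) := fun m hm => hfar2 _ _ (dub m hm)
      have ncc : ∀ m m', m ≠ m' → ¬ G.Adj (c m) (c m') := fun m m' hm =>
        hfar2 _ _ (by have := hdist m m' hm; omega)
      have ncb : ∀ m m', m ≠ m' → ¬ G.Adj (c m) (b m') := fun m m' hm =>
        hfar2 _ _ (by have := dcb' m m' hm; omega)
      have nbb : ∀ m m', m ≠ m' → ¬ G.Adj (b m) (b m') := fun m m' hm =>
        hfar2 _ _ (dbb m m' hm)
      have finj : Function.Injective f := by
        rintro (x | ⟨jx, tx⟩) (y | ⟨jy, ty⟩) hxy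
        · fin_cases x <;> fin_cases y <;> simp only [hf, embFun] at hxy <;>
            (try norm_num [Fin.ext_iff] at hxy) <;>
            first
              | rfl
              | (exact absurd hxy hvu)
              | (exact absurd hxy (hvnc i).1)
              | (exact absurd hxy (Ne.symm (hvnc i).1))
              | (exact absurd hxy (Ne.symm hvu))
              | (exact absurd hxy (Ne.symm hune))
              | (exact absurd hxy hune)
        · fin_cases x <;> fin_cases ty <;> simp only [hf, embFun] at hxy <;>
            (try norm_num [Fin.ext_iff] at hxy) <;>
            first
              | (exact absurd hxy (hvnc (σ jy)).1)
              | (exact absurd hxy (hvb (σ jy)).2)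
              | (exact absurd hxy (hucm (σ jy) (hσne jy)))
              | (exact absurd hxy (hubm (σ jy) (hσne jy)))
              | (exact absurd hxy (hcne i (σ jy) (Ne.symm (hσne jy))))
              | (exact absurd hxy (hcibm (σ jy) (hσne jy)))
        · fin_cases y <;> fin_cases tx <;> simp only [hf, embFun] at hxy <;>
            (try norm_num [Fin.ext_iff] at hxy) <;>
            first
              | (exact absurd hxy.symm (hvnc (σ jx)).1)
              | (exact absurd hxy.symm (hvb (σ jx)).2)
              | (exact absurd hxy.symm (hucm (σ jx) (hσne jx)))
              | (exact absurd hxy.symm (hubm (σ jx) (hσne jx)))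
              | (exact absurd hxy.symm (hcne i (σ jx) (Ne.symm (hσne jx))))
              | (exact absurd hxy.symm (hcibm (σ jx) (hσne jx)))
        · rcases eq_or_ne jx jy with rfl | hjj
          · fin_cases tx <;> fin_cases ty <;> simp only [hf, embFun] at hxy <;>
              (try norm_num [Fin.ext_iff] at hxy) <;>
              first
                | rfl
                | (exact absurd hxy (hcmbm (σ jx)))
                | (exact absurd hxy.symm (hcmbm (σ jx)))
          · have hσjj : σ jx ≠ σ jy := fun h => hjj (hσinj h)
            fin_cases tx <;> fin_cases ty <;> simp only [hf, embFun] at hxy <;>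
              (try norm_num [Fin.ext_iff] at hxy) <;>
              first
                | (exact absurd hxy (hcne _ _ hσjj))
                | (exact absurd hxy.symm (hbnecc (σ jy) (σ jx) (Ne.symm hσjj)))
                | (exact absurd hxy (hbnecc (σ jx) (σ jy) hσjj))
                | (exact absurd hxy (hbne _ _ hσjj))
      have hiff : ∀ x y, G.Adj (f x) (f y) ↔ (P3kP2 k).Adj x y := by
        rintro (x | ⟨jx, tx⟩) (y | ⟨jy, ty⟩)
        · fin_cases x <;> fin_cases y <;>
            simp only [hf, embFun, P3kP2, SimpleGraph.fromRel_adj] <;> (try norm_num [Fin.ext_iff]) <;>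
            first
              | (exact G.loopless _)
              | exact huv
              | exact huv.symm
              | exact hcu.symm
              | exact hcu
              | exact nvc i
              | (intro h; exact (nvc i) h.symm)
        · fin_cases x <;> fin_cases ty <;>
            simp only [hf, embFun, P3kP2, SimpleGraph.fromRel_adj] <;> (try norm_num [Fin.ext_iff]) <;>
            first
              | (exact nvc (σ jy))
              | (exact nvb (σ jy))
              | (exact nuc (σ jy) (hσne jy))
              | (exact nub (σ jy) (hσne jy))
              | (exact ncc i (σ jy) (Ne.symm (hσne jy)))
              | (exact ncb i (σ jy) (Ne.symm (hσne jy)))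
        · fin_cases y <;> fin_cases tx <;>
            simp only [hf, embFun, P3kP2, SimpleGraph.fromRel_adj] <;> (try norm_num [Fin.ext_iff]) <;>
            first
              | (intro h; exact nvc (σ jx) h.symm)
              | (intro h; exact nvb (σ jx) h.symm)
              | (intro h; exact nuc (σ jx) (hσne jx) h.symm)
              | (intro h; exact nub (σ jx) (hσne jx) h.symm)
              | (intro h; exact ncc i (σ jx) (Ne.symm (hσne jx)) h.symm)
              | (intro h; exact ncb i (σ jx) (Ne.symm (hσne jx)) h.symm)
        · fin_cases tx <;> fin_cases ty <;>
            simp only [hf, embFun, P3kP2, SimpleGraph.fromRel_adj] <;> (try norm_num [Fin.ext_iff]) <;>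
            first
              | (intro h
                 rcases eq_or_ne jx jy with rfl | hjj
                 · exact absurd rfl (SimpleGraph.Adj.ne h)
                 · first
                     | (exact ncc _ _ (fun he => hjj (hσinj he)) h)
                     | (exact nbb _ _ (fun he => hjj (hσinj he)) h))
              | (constructor
                 · intro h
                   refine Or.inl ?_
                   by_contra hjj
                   have hjj' : jx ≠ jy := fun he => hjj (by rw [he])
                   first
                     | (exact ncb (σ jx) (σ jy) (fun he => hjj' (hσinj he)) h)
                     | (exact ncb (σ jy) (σ jx) (fun he => hjj' ((hσinj he).symm)) h.symm)
                 · intro hor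
                   have hxyeq : jx = jy := by
                     rcases hor with h | h <;> exact Fin.ext (by omega)
                   subst hxyeq
                   first
                     | (exact hcb (σ jx))
                     | (exact (hcb (σ jx)).symm))
      exact hfree.false ⟨⟨f, finj⟩, @fun x y => hiff x y⟩
  · -- minimality
    intro D' hD'
    refine le_trans ?_ (hDmin D' hD')
    have hdex : ∀ m : Fin (k+1), ∃ x, x ∈ D ∧ x ∈ insert (c m) (G.neighborSet (c m)) := by
      intro m
      by_cases h : c m ∈ D
      · exact ⟨c m, h, Set.mem_insert _ _⟩
      · obtain ⟨x, hx, hadj⟩ := hDdom (c m) h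
        exact ⟨x, hx, Set.mem_insert_of_mem _ hadj.symm⟩
    choose d hdD hdN using hdex
    have hmemdist : ∀ (m : Fin (k+1)) (x : V),
        x ∈ insert (c m) (G.neighborSet (c m)) → G.dist (c m) x ≤ 1 := by
      rintro m x (rfl | h)
      · simp [SimpleGraph.dist_self]
      · exact hadj1 _ _ h
    have hdinj : Function.Injective d := by
      intro m m' h
      by_contra hmm
      have h4 := hdist m m' hmm
      have h1 := hmemdist m (d m) (hdN m)
      have h2 := hmemdist m' (d m') (hdN m')
      have t1 := tri (c m) (d m) (c m')
      have t2 := tri (d m) (d m') (c m')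
      rw [h] at h1
      have hcomm : G.dist (d m') (c m') = G.dist (c m') (d m') := SimpleGraph.dist_comm
      have hdd : G.dist (d m') (d m') = 0 := SimpleGraph.dist_self
      rw [h] at t1 t2
      omega
    have hdsub : Set.range d ⊆ D ∩ U := by
      rintro x ⟨m, rfl⟩
      exact ⟨hdD m, Set.mem_iUnion.mpr ⟨m, hdN m⟩⟩
    have hcard1 : k + 1 ≤ (D ∩ U).ncard := by
      have h1 : (Set.range d).ncard = k + 1 := by
        rw [← Set.image_univ, Set.ncard_image_of_injective _ hdinj, Set.ncard_univ,
          Nat.card_eq_fintype_card, Fintype.card_fin]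
      rw [← h1]
      exact Set.ncard_le_ncard hdsub (Set.toFinite _)
    have hcard2 : (Set.range b).ncard ≤ k + 1 := by
      rw [← Set.image_univ]
      calc (b '' Set.univ).ncard ≤ (Set.univ : Set (Fin (k+1))).ncard :=
            Set.ncard_image_le (Set.toFinite _)
        _ = k + 1 := by rw [Set.ncard_univ, Nat.card_eq_fintype_card, Fintype.card_fin]
    have hsplit : (D ∩ U).ncard + (D \ U).ncard = D.ncard :=
      Set.ncard_inter_add_ncard_diff_eq_ncard D U (Set.toFinite _)
    have := Set.ncard_union_le (D \ U) (Set.range b)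
    omega
end

section
/- Let k ≥ 1 and let G be a finite connected simple graph that is (P3+kP2)-free. If c1, …, c(k+1) are k+1 vertices of G which are pairwise at distance at least three from one another and each of which has two non-adjacent neighbours, then there exist two indices i ≠ j such that d(c_i, c_j) = 3. In particular, G contains no k+1 vertices pairwise at distance at least four from one another each having two non-adjacent neighbours. -/
open SimpleGraph

theorem stmt15 {V : Type*} [Fintype V] (k : ℕ) (hk : 1 ≤ k) (G : SimpleGraph V)
    (hconn : G.Connected) (hfree : HFree G (P3kP2 k)) :
    (∀ c : Fin (k+1) → V, (∀ i j, i ≠ j → 3 ≤ G.dist (c i) (c j)) →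
      (∀ i, ∃ x y : V, x ∈ G.neighborSet (c i) ∧ y ∈ G.neighborSet (c i) ∧
        x ≠ y ∧ ¬ G.Adj x y) →
      ∃ i j, i ≠ j ∧ G.dist (c i) (c j) = 3) ∧
    ¬ ∃ c : Fin (k+1) → V, (∀ i j, i ≠ j → 4 ≤ G.dist (c i) (c j)) ∧
      ∀ i, ∃ x y : V, x ∈ G.neighborSet (c i) ∧ y ∈ G.neighborSet (c i) ∧
        x ≠ y ∧ ¬ G.Adj x y := by
  have main : ¬ ∃ c : Fin (k+1) → V, (∀ i j, i ≠ j → 4 ≤ G.dist (c i) (c j)) ∧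
      ∀ i, ∃ x y : V, x ∈ G.neighborSet (c i) ∧ y ∈ G.neighborSet (c i) ∧
        x ≠ y ∧ ¬ G.Adj x y := by
    rintro ⟨c, hd, hnb⟩
    choose xs ys hx hy hxy hnadj using hnb
    simp only [mem_neighborSet] at hx hy
    set f : Fin 3 ⊕ Fin k × Fin 2 → V := fun a =>
      match a with
      | Sum.inl j => if j = 0 then xs 0 else if j = 1 then c 0 else ys 0
      | Sum.inr (i, b) => if b = 0 then c i.succ else xs i.succ with hf
    set ctr : Fin 3 ⊕ Fin k × Fin 2 → Fin (k+1) := fun a =>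
      match a with | Sum.inl _ => 0 | Sum.inr (i, _) => i.succ with hctrdef
    have hctr : ∀ a, G.dist (c (ctr a)) (f a) ≤ 1 := by
      rintro (j | ⟨i, b⟩)
      · fin_cases j <;> simp only [hf, hctrdef]
        · exact le_of_eq (dist_eq_one_iff_adj.2 (hx 0))
        · simp [SimpleGraph.dist_self]
        · exact le_of_eq (dist_eq_one_iff_adj.2 (hy 0))
      · fin_cases b <;> simp only [hf, hctrdef]
        · simp [SimpleGraph.dist_self]
        · exact le_of_eq (dist_eq_one_iff_adj.2 (hx i.succ))
    have hsep : ∀ a b, ctr a ≠ ctr b → f a ≠ f b ∧ ¬ G.Adj (f a) (f b) := by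
      intro a b hab
      have h4 := hd _ _ hab
      have t1 := hctr a
      have t2 := hctr b
      constructor
      · intro he
        rw [he] at t1
        have := hconn.dist_triangle (u := c (ctr a)) (v := f b) (w := c (ctr b))
        rw [SimpleGraph.dist_comm (u := f b)] at this
        omega
      · intro he
        have h1 := hconn.dist_triangle (u := c (ctr a)) (v := f a) (w := c (ctr b))
        have h2 := hconn.dist_triangle (u := f a) (v := f b) (w := c (ctr b))
        have h3 : G.dist (f a) (f b) ≤ 1 := le_of_eq (dist_eq_one_iff_adj.2 he)
        rw [SimpleGraph.dist_comm (u := f b)] at h2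
        omega
    have inj : Function.Injective f := by
      rintro a b he
      by_cases hc : ctr a = ctr b
      · match a, b with
        | Sum.inl j1, Sum.inl j2 =>
          fin_cases j1 <;> fin_cases j2 <;> simp only [hf] at he <;>
            first
            | rfl
            | exact absurd he (hxy 0)
            | exact absurd he.symm (hxy 0)
            | exact absurd he (hx 0).ne'
            | exact absurd he.symm (hx 0).ne'
            | exact absurd he (hy 0).ne'
            | exact absurd he.symm (hy 0).ne'
        | Sum.inl j1, Sum.inr p => exact absurd hc (Fin.succ_ne_zero _).symm
        | Sum.inr p, Sum.inl j2 => exact absurd hc (Fin.succ_ne_zero _)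
        | Sum.inr ⟨i1, b1⟩, Sum.inr ⟨i2, b2⟩ =>
          have hi : i1 = i2 := Fin.succ_injective _ hc
          subst hi
          fin_cases b1 <;> fin_cases b2 <;> simp only [hf] at he ⊢ <;>
            first
            | rfl
            | exact absurd he (hx i1.succ).ne
            | exact absurd he.symm (hx i1.succ).ne
      · exact absurd he (hsep a b hc).1
    have hadj : ∀ a b, (P3kP2 k).Adj a b ↔ G.Adj (f a) (f b) := by
      have hHF : ∀ a b, ctr a ≠ ctr b → ((P3kP2 k).Adj a b ↔ G.Adj (f a) (f b)) := by
        intro a b hab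
        constructor
        · intro h
          exfalso
          match a, b with
          | Sum.inl j1, Sum.inr p =>
            rcases h.2 with h' | h' <;> exact h'
          | Sum.inr p, Sum.inl j2 =>
            rcases h.2 with h' | h' <;> exact h'
          | Sum.inl j1, Sum.inl j2 => exact hab rfl
          | Sum.inr ⟨i1, b1⟩, Sum.inr ⟨i2, b2⟩ =>
            have : i1 ≠ i2 := fun hh => hab (by simp [hctrdef, hh])
            rcases h.2 with ⟨h', -⟩ | ⟨h', -⟩
            · exact this h'
            · exact this h'.symm
        · intro h
          exact absurd h (hsep a b hab).2
      have hys : ¬ G.Adj (ys 0) (xs 0) := fun h => hnadj 0 h.symm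
      rintro (j1 | ⟨i1, b1⟩) (j2 | ⟨i2, b2⟩)
      · fin_cases j1 <;> fin_cases j2 <;>
          simp [P3kP2, hf, hx 0, (hx 0).symm, hy 0, (hy 0).symm, hnadj 0, hys]
      · exact hHF _ _ (Fin.succ_ne_zero _).symm
      · exact hHF _ _ (Fin.succ_ne_zero _)
      · by_cases hi : i1 = i2
        · subst hi
          fin_cases b1 <;> fin_cases b2 <;>
            simp [P3kP2, hf, hx i1.succ, (hx i1.succ).symm]
        · exact hHF _ _ (fun h => hi (Fin.succ_injective _ h))
    exact hfree.false ⟨⟨f, inj⟩, fun {a b} => (hadj a b).symm⟩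
  refine ⟨?_, main⟩
  intro c hd hnb
  by_contra h
  push_neg at h
  exact main ⟨c, fun i j hij => by have := hd i j hij; have := h i j hij; omega, hnb⟩
end
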